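/- Let E be a quantum channel and τ a positive definite density matrix with E(τ) = τ. Then for any density matrix ρ, Tr(τ^{-1} E(ρ)²) ≤ Tr(τ^{-1} ρ²). Equivalently, the weighted distance ‖ρ - τ‖²_{τ^{-1}} = Tr(τ^{-1}(ρ-τ)†(ρ-τ)) is non-increasing under E. -/

import Mathlib

open Matrix ComplexOrder
noncomputable section

abbrev Mat (d : ℕ) := Matrix (Fin d) (Fin d) ℂ

/-- A quantum channel (CPTP map), presented via a Kraus decomposition. -/
def IsCPTP {d : ℕ} (E : Mat d →ₗ[ℂ] Mat d) : Prop :=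
  ∃ (n : ℕ) (K : Fin n → Mat d),
    (∀ ρ, E ρ = ∑ i, K i * ρ * (K i)ᴴ) ∧ (∑ i, (K i)ᴴ * K i = 1)

/-!
The map `A ↦ A σ⁻¹ Aᴴ` satisfies a Schwarz inequality under every completely positive map `E`
(Lieb–Ruskai): `E(A) E(σ)⁻¹ E(A)ᴴ ≤ E(A σ⁻¹ Aᴴ)`. For a Kraus decomposition `E(X) = ∑ Kᵢ X Kᵢᴴ`
the difference is `∑ Wᵢ σ⁻¹ Wᵢᴴ` with `Wᵢ = Kᵢ A - E(A) E(σ)⁻¹ Kᵢ σ`, hence positive.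
Taking traces, a trace-preserving `E` with fixed point `τ` decreases `Tr(A τ⁻¹ Aᴴ)`; the weighted
distance to `τ` differs from this by terms that only involve `Tr A` and `Tr τ`, which `E`
preserves.
-/

namespace Matrix

variable {𝕜 m ι : Type*} [RCLike 𝕜] [Fintype m] [Fintype ι]

def krausMap (K : ι → Matrix m m 𝕜) (X : Matrix m m 𝕜) : Matrix m m 𝕜 :=
  ∑ i, K i * X * (K i)ᴴ

variable (K : ι → Matrix m m 𝕜)

theorem krausMap_conjTranspose (X : Matrix m m 𝕜) : (krausMap K X)ᴴ = krausMap K Xᴴ := by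
  simp only [krausMap, conjTranspose_sum, conjTranspose_mul, conjTranspose_conjTranspose,
    Matrix.mul_assoc]

theorem sum_sub_mul_mul_conjTranspose_sub (A B C Z : Matrix m m 𝕜) :
    ∑ i, (K i * A - Z * K i * B) * C * (K i * A - Z * K i * B)ᴴ =
      krausMap K (A * C * Aᴴ) - krausMap K (A * C * Bᴴ) * Zᴴ - Z * krausMap K (B * C * Aᴴ)
        + Z * krausMap K (B * C * Bᴴ) * Zᴴ := by
  simp only [krausMap, Finset.mul_sum, Finset.sum_mul, ← Finset.sum_sub_distrib,
    ← Finset.sum_add_distrib]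
  refine Finset.sum_congr rfl fun i _ => ?_
  simp only [conjTranspose_sub, conjTranspose_mul]
  noncomm_ring

variable [DecidableEq m]

theorem trace_krausMap {K : ι → Matrix m m 𝕜} (hK : ∑ i, (K i)ᴴ * K i = 1) (X : Matrix m m 𝕜) :
    (krausMap K X).trace = X.trace := by
  simp only [krausMap, trace_sum, trace_mul_cycle (K _)]
  rw [← trace_sum, ← Finset.sum_mul, hK, Matrix.one_mul]

theorem posSemidef_krausMap_mul_inv_mul_conjTranspose_sub {σ : Matrix m m 𝕜} (hσ : σ.PosDef)
    (hEσ : IsUnit (krausMap K σ).det) (A : Matrix m m 𝕜) :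
    (krausMap K (A * σ⁻¹ * Aᴴ) - krausMap K A * (krausMap K σ)⁻¹ * (krausMap K A)ᴴ).PosSemidef := by
  set Z := krausMap K A * (krausMap K σ)⁻¹
  have hσdet : IsUnit σ.det := (isUnit_iff_isUnit_det σ).mp hσ.isUnit
  have hZ : Zᴴ = (krausMap K σ)⁻¹ * (krausMap K A)ᴴ := by
    rw [conjTranspose_mul, conjTranspose_nonsing_inv, krausMap_conjTranspose, hσ.isHermitian.eq]
  have hsum := posSemidef_sum Finset.univ fun i _ =>
    hσ.inv.posSemidef.mul_mul_conjTranspose_same (K i * A - Z * K i * σ)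
  have hcross : krausMap K A * Zᴴ = Z * (krausMap K A)ᴴ := by
    simp only [hZ, Z, Matrix.mul_assoc]
  have hquad : Z * krausMap K σ * Zᴴ = Z * (krausMap K A)ᴴ := by
    rw [nonsing_inv_mul_cancel_right _ _ hEσ, hcross]
  rw [sum_sub_mul_mul_conjTranspose_sub] at hsum
  simp only [hσ.isHermitian.eq, nonsing_inv_mul_cancel_right _ _ hσdet, mul_nonsing_inv _ hσdet,
    Matrix.one_mul, ← krausMap_conjTranspose, hcross, hquad] at hsum
  convert hsum using 1
  abel

theorem re_trace_krausMap_mul_inv_mul_conjTranspose_le {K : ι → Matrix m m 𝕜}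
    (hK : ∑ i, (K i)ᴴ * K i = 1) {σ : Matrix m m 𝕜} (hσ : σ.PosDef)
    (hEσ : IsUnit (krausMap K σ).det) (A : Matrix m m 𝕜) :
    RCLike.re (krausMap K A * (krausMap K σ)⁻¹ * (krausMap K A)ᴴ).trace ≤
      RCLike.re (A * σ⁻¹ * Aᴴ).trace := by
  have hnonneg := (RCLike.nonneg_iff.mp
    (posSemidef_krausMap_mul_inv_mul_conjTranspose_sub K hσ hEσ A).trace_nonneg).1
  rw [trace_sub, trace_krausMap hK, map_sub] at hnonneg
  linarith

theorem trace_inv_mul_conjTranspose_sub_mul_sub {τ : Matrix m m 𝕜} (hτ : τ.IsHermitian)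
    (hτdet : IsUnit τ.det) (A : Matrix m m 𝕜) :
    (τ⁻¹ * (A - τ)ᴴ * (A - τ)).trace = (τ⁻¹ * Aᴴ * A).trace - star A.trace - A.trace + τ.trace := by
  have hcycle : (τ⁻¹ * Aᴴ * τ).trace = Aᴴ.trace := by
    rw [trace_mul_cycle, mul_nonsing_inv _ hτdet, Matrix.one_mul]
  simp only [conjTranspose_sub, hτ.eq, Matrix.mul_sub, Matrix.sub_mul, trace_sub, hcycle,
    nonsing_inv_mul _ hτdet, Matrix.one_mul, trace_conjTranspose]
  ring

end Matrix

theorem weighted_purity_nonincreasing_general {d : ℕ}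
    (E : Mat d →ₗ[ℂ] Mat d) (hE : IsCPTP E)
    (τ : Mat d) (hτ : τ.PosDef) (hfix : E τ = τ)
    (ρ : Mat d) (hρ : ρ.PosSemidef) :
    Complex.re (Matrix.trace (τ⁻¹ * E ρ * E ρ)) ≤ Complex.re (Matrix.trace (τ⁻¹ * ρ * ρ))
      ∧ Complex.re (Matrix.trace (τ⁻¹ * (E ρ - τ)ᴴ * (E ρ - τ)))
        ≤ Complex.re (Matrix.trace (τ⁻¹ * (ρ - τ)ᴴ * (ρ - τ))) := by
  obtain ⟨n, K, hEK, hK⟩ := hE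
  have hEK : ⇑E = krausMap K := funext hEK
  have hτdet : IsUnit τ.det := (isUnit_iff_isUnit_det τ).mp hτ.isUnit
  have hρH : ρᴴ = ρ := hρ.isHermitian.eq
  have hEρH : (E ρ)ᴴ = E ρ := by rw [hEK, krausMap_conjTranspose, hρH]
  have hEρtr : (E ρ).trace = ρ.trace := by rw [hEK, trace_krausMap hK]
  have hpurity : (τ⁻¹ * E ρ * E ρ).trace.re ≤ (τ⁻¹ * ρ * ρ).trace.re := by
    have h := re_trace_krausMap_mul_inv_mul_conjTranspose_le hK hτ (by rwa [← hEK, hfix]) ρ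
    rw [← hEK, hfix, hEρH, hρH, RCLike.re_to_complex, RCLike.re_to_complex] at h
    rwa [trace_mul_cycle, trace_mul_cycle τ⁻¹]
  refine ⟨hpurity, ?_⟩
  rw [trace_inv_mul_conjTranspose_sub_mul_sub hτ.isHermitian hτdet,
    trace_inv_mul_conjTranspose_sub_mul_sub hτ.isHermitian hτdet, hEρH, hρH, hEρtr]
  simp only [Complex.add_re, Complex.sub_re]
  linarith

/-- If `τ > 0` is a fixed point of a quantum channel `E`, then
`Tr(τ⁻¹ E(ρ)²) ≤ Tr(τ⁻¹ ρ²)` for every density matrix `ρ`; equivalently the weighted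
distance `‖ρ - τ‖²_{τ⁻¹}` is non-increasing under `E`. -/
theorem weighted_purity_nonincreasing {d : ℕ}
    (E : Mat d →ₗ[ℂ] Mat d) (hE : IsCPTP E)
    (τ : Mat d) (hτ : τ.PosDef) (hτtr : τ.trace = 1) (hfix : E τ = τ)
    (ρ : Mat d) (hρ : ρ.PosSemidef) (htr : ρ.trace = 1) :
    Complex.re (Matrix.trace (τ⁻¹ * E ρ * E ρ)) ≤ Complex.re (Matrix.trace (τ⁻¹ * ρ * ρ))
      ∧ Complex.re (Matrix.trace (τ⁻¹ * (E ρ - τ)ᴴ * (E ρ - τ)))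
        ≤ Complex.re (Matrix.trace (τ⁻¹ * (ρ - τ)ᴴ * (ρ - τ))) :=
  weighted_purity_nonincreasing_general E hE τ hτ hfix ρ hρ
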